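/- The kernel of H_prop equals { Σ_{t=0}^{N} (U_t⋯U₁ α) ⊗ |t⟩ : α ∈ ℂ^D } (where the empty product for t = 0 is the identity), and there exists a universal constant c > 0 such that the smallest nonzero eigenvalue of H_prop is at least c/N². -/

import Mathlib

open Matrix Kronecker

noncomputable section

/-- The smallest nonzero eigenvalue of a matrix `M` (as an infimum over the set of nonzero
real eigenvalues). -/
def gammaM {ι : Type*} [Fintype ι] [DecidableEq ι] (M : Matrix ι ι ℂ) : ℝ :=
  sInf {r : ℝ | r ≠ 0 ∧ ∃ w : ι → ℂ, w ≠ 0 ∧ M.mulVec w = (r : ℂ) • w}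

/-- `prodU D U t = U_t ⋯ U₁` (the empty product for `t = 0` being the identity). -/
def prodU (D : ℕ) (U : ℕ → Matrix (Fin D) (Fin D) ℂ) : ℕ → Matrix (Fin D) (Fin D) ℂ
  | 0 => 1
  | k + 1 => U (k + 1) * prodU D U k

/-- Kitaev's propagation Hamiltonian on `ℂ^D ⊗ ℂ^{N+1}`:
`H_prop = Σ_{j=1}^{N} [(1/2)·I ⊗ (|j⟩⟨j| + |j−1⟩⟨j−1|) − (1/2)·U_j ⊗ |j⟩⟨j−1|
− (1/2)·U_j† ⊗ |j−1⟩⟨j|]`. -/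
def Hprop (D N : ℕ) (U : ℕ → Matrix (Fin D) (Fin D) ℂ) :
    Matrix (Fin D × Fin (N + 1)) (Fin D × Fin (N + 1)) ℂ :=
  ∑ j : Fin N,
    ((1 / 2 : ℂ) • ((1 : Matrix (Fin D) (Fin D) ℂ) ⊗ₖ
        (Matrix.single j.succ j.succ (1 : ℂ) +
          Matrix.single j.castSucc j.castSucc (1 : ℂ))) -
      (1 / 2 : ℂ) • (U (j.val + 1) ⊗ₖ Matrix.single j.succ j.castSucc (1 : ℂ)) -
      (1 / 2 : ℂ) • ((U (j.val + 1))ᴴ ⊗ₖ Matrix.single j.castSucc j.succ (1 : ℂ)))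

/-!
Each summand of `H_prop` is `½ C_jᴴ C_j`, where `C_j w = w_{j+1} - U_{j+1} w_j` measures how far
the slices `w_t` of `w` fail to follow the circuit. Hence `⟪w, H w⟫ = ½ Σ_j ‖C_j w‖²`, and the
kernel consists of the histories `w_t = U_t ⋯ U₁ α`. Undoing the circuit slice by slice,
`v_t = (U_t ⋯ U₁)ᴴ w_t`, is unitary and turns `C_j w` into the plain difference `v_{j+1} - v_j`,
so `H_prop` is unitarily equivalent to `½ I ⊗ L` with `L` the Laplacian of the path on `N + 1`
vertices. An eigenvector with eigenvalue `r ≠ 0` is orthogonal to the kernel, i.e.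
`Σ_t v_t = 0`, and the discrete Poincaré inequality
`Σ_t ‖v_t‖² ≤ N (N + 1) / 2 · Σ_j ‖v_{j+1} - v_j‖²` gives `r ≥ 1 / (N (N + 1)) ≥ 1 / (2 N²)`.
-/

open WithLp

lemma star_dotProduct_self_eq_norm_sq {ι : Type*} [Fintype ι] (x : ι → ℂ) :
    star x ⬝ᵥ x = ((‖toLp 2 x‖ ^ 2 : ℝ) : ℂ) := by
  rw [dotProduct_comm, ← EuclideanSpace.inner_toLp_toLp, inner_self_eq_norm_sq_to_K]
  push_cast
  rfl

lemma norm_toLp_mulVec_of_mem_unitaryGroup {ι : Type*} [Fintype ι] [DecidableEq ι]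
    {A : Matrix ι ι ℂ} (hA : A ∈ unitaryGroup ι ℂ) (x : ι → ℂ) :
    ‖toLp 2 (A *ᵥ x)‖ = ‖toLp 2 x‖ := by
  have h : star (A *ᵥ x) ⬝ᵥ (A *ᵥ x) = star x ⬝ᵥ x := by
    rw [star_mulVec, ← dotProduct_mulVec, mulVec_mulVec, ← star_eq_conjTranspose,
      mem_unitaryGroup_iff'.1 hA, one_mulVec]
  simp only [star_dotProduct_self_eq_norm_sq, Complex.ofReal_inj] at h
  exact (sq_eq_sq₀ (norm_nonneg _) (norm_nonneg _)).1 h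

lemma norm_sq_toLp_prod {𝕜 ι κ : Type*} [RCLike 𝕜] [Fintype ι] [Fintype κ] (w : ι × κ → 𝕜) :
    ‖toLp 2 w‖ ^ 2 = ∑ t, ‖toLp 2 (fun i => w (i, t))‖ ^ 2 := by
  simp only [EuclideanSpace.norm_sq_eq, Fintype.sum_prod_type]
  exact Finset.sum_comm

lemma kronecker_single_mulVec {R ι κ : Type*} [CommSemiring R] [Fintype ι] [Fintype κ]
    [DecidableEq κ] (A : Matrix ι ι R) (t : κ) (w : ι × κ → R) :
    (A ⊗ₖ single () t 1) *ᵥ w = fun p => (A *ᵥ fun i => w (i, t)) p.1 := by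
  ext ⟨i, u⟩
  simp [mulVec, dotProduct, Fintype.sum_prod_type, single_apply]

lemma Matrix.IsHermitian.star_dotProduct_eq_zero_of_mulVec_eq_smul {𝕜 ι : Type*} [RCLike 𝕜]
    [Fintype ι] {A : Matrix ι ι 𝕜} (hA : A.IsHermitian) {k w : ι → 𝕜} (hk : A *ᵥ k = 0)
    {r : 𝕜} (hr : r ≠ 0) (hw : A *ᵥ w = r • w) : star k ⬝ᵥ w = 0 := by
  have : r * (star k ⬝ᵥ w) = 0 := by
    rw [← smul_eq_mul, ← dotProduct_smul, ← hw, dotProduct_mulVec, ← hA.eq, ← star_mulVec, hk,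
      star_zero, zero_dotProduct]
  exact (mul_eq_zero.1 this).resolve_left hr

lemma le_gammaM {ι : Type*} [Fintype ι] [DecidableEq ι] {M : Matrix ι ι ℂ} (hM : M.IsHermitian)
    (h0 : M ≠ 0) {b : ℝ}
    (hb : ∀ (r : ℝ) (w : ι → ℂ), r ≠ 0 → w ≠ 0 → M *ᵥ w = (r : ℂ) • w → b ≤ r) :
    b ≤ gammaM M := by
  -- `h0` makes the set of nonzero eigenvalues nonempty: `sInf ∅ = 0` in `ℝ`.
  obtain ⟨v, t, ht, hv, hvt⟩ := hM.exists_eigenvector_of_ne_zero h0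
  refine le_csInf ⟨t, ht, v, hv, ?_⟩ fun r ⟨hr, w, hw, h⟩ => hb r w hr hw h
  rw [hvt, Complex.coe_smul]

section Poincare

variable {E : Type*}

lemma norm_sub_sq_le_mul_sum [SeminormedAddCommGroup E] (u : ℕ → E) (t : ℕ) :
    ‖u t - u 0‖ ^ 2 ≤ t * ∑ j ∈ Finset.range t, ‖u (j + 1) - u j‖ ^ 2 := by
  rw [← Finset.sum_range_sub]
  calc ‖∑ j ∈ Finset.range t, (u (j + 1) - u j)‖ ^ 2
      ≤ (∑ j ∈ Finset.range t, ‖u (j + 1) - u j‖) ^ 2 := by gcongr; exact norm_sum_le _ _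
    _ ≤ t * ∑ j ∈ Finset.range t, ‖u (j + 1) - u j‖ ^ 2 := by
      simpa using sq_sum_le_card_mul_sum_sq (s := Finset.range t)
        (f := fun j => ‖u (j + 1) - u j‖)

variable [NormedAddCommGroup E]

lemma sum_norm_sq_le_sum_norm_sub_sq (𝕜 : Type*) [RCLike 𝕜] [InnerProductSpace 𝕜 E]
    {ι : Type*} (s : Finset ι) (v : ι → E) (hv : ∑ t ∈ s, v t = 0) (c : E) :
    ∑ t ∈ s, ‖v t‖ ^ 2 ≤ ∑ t ∈ s, ‖v t - c‖ ^ 2 := by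
  have hcross : ∑ t ∈ s, RCLike.re (inner 𝕜 (v t) c) = 0 := by
    rw [← map_sum, ← sum_inner, hv, inner_zero_left, map_zero]
  simp only [@norm_sub_sq 𝕜, Finset.sum_add_distrib, Finset.sum_sub_distrib, ← Finset.mul_sum,
    hcross]
  have := Finset.sum_nonneg fun t (_ : t ∈ s) => sq_nonneg ‖c‖
  linarith

lemma sum_range_norm_sq_le (𝕜 : Type*) [RCLike 𝕜] [InnerProductSpace 𝕜 E] (n : ℕ) (u : ℕ → E)
    (hu : ∑ t ∈ Finset.range (n + 1), u t = 0) :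
    ∑ t ∈ Finset.range (n + 1), ‖u t‖ ^ 2 ≤
      n * (n + 1) / 2 * ∑ j ∈ Finset.range n, ‖u (j + 1) - u j‖ ^ 2 := by
  set S := ∑ j ∈ Finset.range n, ‖u (j + 1) - u j‖ ^ 2
  have hgauss : ∑ t ∈ Finset.range (n + 1), (t : ℝ) = n * (n + 1) / 2 := by
    have h := Finset.sum_range_id_mul_two (n + 1)
    rw [Nat.add_sub_cancel] at h
    have : ((∑ t ∈ Finset.range (n + 1), t : ℕ) : ℝ) * 2 = (n + 1) * n := by exact_mod_cast h
    push_cast at this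
    linarith
  calc ∑ t ∈ Finset.range (n + 1), ‖u t‖ ^ 2
      ≤ ∑ t ∈ Finset.range (n + 1), ‖u t - u 0‖ ^ 2 :=
        sum_norm_sq_le_sum_norm_sub_sq 𝕜 _ _ hu _
    _ ≤ ∑ t ∈ Finset.range (n + 1), (t : ℝ) * S := by
        refine Finset.sum_le_sum fun t ht => (norm_sub_sq_le_mul_sum u t).trans ?_
        gcongr
        exact Finset.sum_le_sum_of_subset_of_nonneg
          (Finset.range_subset_range.2 (Nat.lt_succ_iff.1 (Finset.mem_range.1 ht)))
          fun _ _ _ => sq_nonneg _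
    _ = n * (n + 1) / 2 * S := by rw [← Finset.sum_mul, hgauss]

lemma sum_norm_sq_le_of_sum_eq_zero (𝕜 : Type*) [RCLike 𝕜] [InnerProductSpace 𝕜 E] (n : ℕ)
    (v : Fin (n + 1) → E) (hv : ∑ t, v t = 0) :
    ∑ t, ‖v t‖ ^ 2 ≤ n * (n + 1) / 2 * ∑ j : Fin n, ‖v j.succ - v j.castSucc‖ ^ 2 := by
  let u : ℕ → E := fun t => v ⟨min t n, by omega⟩
  have hu : ∀ t : Fin (n + 1), u t = v t := fun t => congrArg v (Fin.ext (by dsimp only; omega))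
  have hd : ∀ j : Fin n, u (j + 1) - u j = v j.succ - v j.castSucc := fun j => by
    congr 2 <;> exact congrArg v (Fin.ext (by simp only [Fin.val_succ, Fin.val_castSucc]; omega))
  have := sum_range_norm_sq_le 𝕜 n u (by rw [← Fin.sum_univ_eq_sum_range]; simpa only [hu])
  rw [← Fin.sum_univ_eq_sum_range, ← Fin.sum_univ_eq_sum_range (fun j => ‖u (j + 1) - u j‖ ^ 2)]
    at this
  simpa only [hu, hd] using this

end Poincare

section prodU

variable {D N : ℕ} (U : ℕ → Matrix (Fin D) (Fin D) ℂ)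

lemma forall_succ_eq_mulVec_iff_eq_prodU_mulVec (x : Fin (N + 1) → Fin D → ℂ) :
    (∀ j : Fin N, x j.succ = U (j + 1) *ᵥ x j.castSucc) ↔ ∀ t, x t = prodU D U t *ᵥ x 0 := by
  constructor
  · intro h t
    induction t using Fin.induction with
    | zero => simp [prodU]
    | succ j ih => rw [h, ih, mulVec_mulVec]; rfl
  · intro h j
    rw [h, h j.castSucc, mulVec_mulVec]
    rfl

lemma prodU_mem_unitaryGroup (hU : ∀ j < N, U (j + 1) ∈ unitaryGroup (Fin D) ℂ) {t : ℕ}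
    (ht : t ≤ N) : prodU D U t ∈ unitaryGroup (Fin D) ℂ := by
  induction t with
  | zero => exact one_mem _
  | succ t ih => exact mul_mem (hU t ht) (ih (by omega))

end prodU

namespace Hprop

variable {D N : ℕ} (U : ℕ → Matrix (Fin D) (Fin D) ℂ)

lemma isHermitian : (Hprop D N U).IsHermitian := by
  simp only [IsHermitian, Hprop, conjTranspose_sum, conjTranspose_sub, conjTranspose_smul,
    conjTranspose_kronecker, conjTranspose_add, conjTranspose_single, conjTranspose_one,
    conjTranspose_conjTranspose, star_one, star_div₀, star_ofNat]
  refine Finset.sum_congr rfl fun j _ => ?_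
  abel

lemma trace_eq : (Hprop D N U).trace = N * D := by
  simp [Hprop, trace_sum, trace_sub, trace_smul, trace_kronecker, trace_add, trace_single_eq_same,
    Fin.castSucc_lt_succ.ne, Fin.castSucc_lt_succ.ne']
  exact Or.inl (by ring)

lemma ne_zero (hD : 1 ≤ D) (hN : 1 ≤ N) : Hprop D N U ≠ 0 := fun h => by
  have := trace_eq (N := N) U
  rw [h, trace_zero] at this
  norm_cast at this
  have := Nat.mul_pos hN hD
  omega

def defect (w : Fin D × Fin (N + 1) → ℂ) (j : Fin N) : Fin D → ℂ :=
  (fun i => w (i, j.succ)) - U (j + 1) *ᵥ fun i => w (i, j.castSucc)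

def defectMatrix (j : Fin N) : Matrix (Fin D × Unit) (Fin D × Fin (N + 1)) ℂ :=
  (1 : Matrix (Fin D) (Fin D) ℂ) ⊗ₖ single () j.succ 1 - U (j + 1) ⊗ₖ single () j.castSucc 1

lemma defectMatrix_mulVec (j : Fin N) (w : Fin D × Fin (N + 1) → ℂ) :
    defectMatrix U j *ᵥ w = fun p => defect U w j p.1 := by
  ext p
  simp [defectMatrix, defect, sub_mulVec, kronecker_single_mulVec]

lemma forall_defect_eq_zero_iff (w : Fin D × Fin (N + 1) → ℂ) :
    (∀ j, defect U w j = 0) ↔ ∃ α : Fin D → ℂ, w = fun p => (prodU D U p.2 *ᵥ α) p.1 := by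
  simp only [defect, sub_eq_zero]
  rw [forall_succ_eq_mulVec_iff_eq_prodU_mulVec U fun t i => w (i, t)]
  constructor
  · intro h
    exact ⟨_, funext fun p => congrFun (h p.2) p.1⟩
  · rintro ⟨α, rfl⟩ t
    simp [prodU]

def gauge (w : Fin D × Fin (N + 1) → ℂ) (t : Fin (N + 1)) : EuclideanSpace ℂ (Fin D) :=
  toLp 2 ((prodU D U t)ᴴ *ᵥ fun i => w (i, t))

variable {U}

lemma eq_half_smul_sum_conjTranspose_mul (hU : ∀ j < N, U (j + 1) ∈ unitaryGroup (Fin D) ℂ) :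
    Hprop D N U = (1 / 2 : ℂ) • ∑ j : Fin N, (defectMatrix U j)ᴴ * defectMatrix U j := by
  rw [Hprop, Finset.smul_sum]
  refine Finset.sum_congr rfl fun j _ => ?_
  have hUj : (U (j + 1))ᴴ * U (j + 1) = 1 := mem_unitaryGroup_iff'.1 (hU j j.isLt)
  simp only [defectMatrix, conjTranspose_sub, conjTranspose_kronecker, Matrix.sub_mul,
    Matrix.mul_sub, ← mul_kronecker_mul, conjTranspose_single, conjTranspose_one, star_one,
    single_mul_single_same, Matrix.one_mul, mul_one, hUj, kronecker_add]
  module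

lemma star_dotProduct_mulVec (hU : ∀ j < N, U (j + 1) ∈ unitaryGroup (Fin D) ℂ)
    (w : Fin D × Fin (N + 1) → ℂ) :
    star w ⬝ᵥ Hprop D N U *ᵥ w = ((1 / 2 * ∑ j, ‖toLp 2 (defect U w j)‖ ^ 2 : ℝ) : ℂ) := by
  have hterm : ∀ j, star w ⬝ᵥ (defectMatrix U j)ᴴ *ᵥ (defectMatrix U j *ᵥ w) =
      ((‖toLp 2 (defect U w j)‖ ^ 2 : ℝ) : ℂ) := fun j => by
    rw [dotProduct_mulVec, ← star_mulVec, star_dotProduct_self_eq_norm_sq, defectMatrix_mulVec,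
      norm_sq_toLp_prod, Fintype.sum_unique]
  rw [eq_half_smul_sum_conjTranspose_mul hU, smul_mulVec, sum_mulVec, dotProduct_smul,
    dotProduct_sum]
  simp only [← mulVec_mulVec, hterm, smul_eq_mul]
  push_cast
  rfl

lemma mulVec_eq_zero_iff_forall_defect_eq_zero
    (hU : ∀ j < N, U (j + 1) ∈ unitaryGroup (Fin D) ℂ) (w : Fin D × Fin (N + 1) → ℂ) :
    Hprop D N U *ᵥ w = 0 ↔ ∀ j, defect U w j = 0 := by
  constructor
  · intro h j
    have hsum : ∑ j, ‖toLp 2 (defect U w j)‖ ^ 2 = 0 := by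
      have := star_dotProduct_mulVec hU w
      rw [h, dotProduct_zero, eq_comm, Complex.ofReal_eq_zero] at this
      linarith
    have := (Finset.sum_eq_zero_iff_of_nonneg fun j _ => sq_nonneg _).1 hsum j (Finset.mem_univ j)
    simpa using this
  · intro h
    have hC : ∀ j, defectMatrix U j *ᵥ w = 0 := fun j => by
      rw [defectMatrix_mulVec, h]
      rfl
    simp only [eq_half_smul_sum_conjTranspose_mul hU, smul_mulVec, sum_mulVec, ← mulVec_mulVec,
      hC, mulVec_zero, Finset.sum_const_zero, smul_zero]

lemma norm_sq_eq_sum_norm_sq_gauge (hU : ∀ j < N, U (j + 1) ∈ unitaryGroup (Fin D) ℂ)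
    (w : Fin D × Fin (N + 1) → ℂ) : ‖toLp 2 w‖ ^ 2 = ∑ t, ‖gauge U w t‖ ^ 2 := by
  rw [norm_sq_toLp_prod]
  refine Finset.sum_congr rfl fun t _ => ?_
  have hP : (prodU D U t)ᴴ ∈ unitaryGroup (Fin D) ℂ :=
    Unitary.star_mem (prodU_mem_unitaryGroup U hU (Nat.lt_succ_iff.1 t.isLt))
  rw [gauge, norm_toLp_mulVec_of_mem_unitaryGroup hP]

lemma norm_defect_eq (hU : ∀ j < N, U (j + 1) ∈ unitaryGroup (Fin D) ℂ)
    (w : Fin D × Fin (N + 1) → ℂ) (j : Fin N) :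
    ‖toLp 2 (defect U w j)‖ = ‖gauge U w j.succ - gauge U w j.castSucc‖ := by
  have hP : (prodU D U (j + 1))ᴴ * U (j + 1) = (prodU D U j)ᴴ := by
    rw [prodU, conjTranspose_mul, Matrix.mul_assoc, ← star_eq_conjTranspose (U _),
      mem_unitaryGroup_iff'.1 (hU j j.isLt), Matrix.mul_one]
  have hdiff : gauge U w j.succ - gauge U w j.castSucc =
      toLp 2 ((prodU D U (j + 1))ᴴ *ᵥ defect U w j) := by
    rw [defect, mulVec_sub, mulVec_mulVec, hP]
    rfl
  have hP' : (prodU D U (j + 1))ᴴ ∈ unitaryGroup (Fin D) ℂ :=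
    Unitary.star_mem (prodU_mem_unitaryGroup U hU j.isLt)
  rw [hdiff, norm_toLp_mulVec_of_mem_unitaryGroup hP']

lemma sum_gauge_eq_zero {w : Fin D × Fin (N + 1) → ℂ}
    (hw : ∀ α : Fin D → ℂ, star (fun p => (prodU D U p.2 *ᵥ α) p.1) ⬝ᵥ w = 0) :
    ∑ t, gauge U w t = 0 := by
  set s := ∑ t : Fin (N + 1), (prodU D U t)ᴴ *ᵥ fun i => w (i, t)
  have hs : ∀ α, star α ⬝ᵥ s = star (fun p => (prodU D U p.2 *ᵥ α) p.1) ⬝ᵥ w := fun α => by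
    simp only [s, dotProduct_sum, dotProduct_mulVec, ← star_mulVec]
    simp only [dotProduct, Fintype.sum_prod_type, Pi.star_apply]
    exact Finset.sum_comm
  have hsum : ∑ t, gauge U w t = toLp 2 s := by rw [WithLp.toLp_sum]; rfl
  have hnorm : ((‖toLp 2 s‖ ^ 2 : ℝ) : ℂ) = 0 := by
    rw [← star_dotProduct_self_eq_norm_sq, hs, hw]
  simpa [hsum] using hnorm

theorem one_le_mul_eigenvalue (hU : ∀ j < N, U (j + 1) ∈ unitaryGroup (Fin D) ℂ) {r : ℝ}
    {w : Fin D × Fin (N + 1) → ℂ} (hr : r ≠ 0) (hw : w ≠ 0)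
    (h : Hprop D N U *ᵥ w = (r : ℂ) • w) : 1 ≤ N * (N + 1) * r := by
  have hperp : ∀ α : Fin D → ℂ, star (fun p => (prodU D U p.2 *ᵥ α) p.1) ⬝ᵥ w = 0 := fun α =>
    (isHermitian U).star_dotProduct_eq_zero_of_mulVec_eq_smul
      ((mulVec_eq_zero_iff_forall_defect_eq_zero hU _).2
        ((forall_defect_eq_zero_iff U _).2 ⟨α, rfl⟩))
      (Complex.ofReal_ne_zero.2 hr) h
  have hquad : r * ‖toLp 2 w‖ ^ 2 =
      1 / 2 * ∑ j : Fin N, ‖gauge U w j.succ - gauge U w j.castSucc‖ ^ 2 := by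
    have := star_dotProduct_mulVec hU w
    rw [h, dotProduct_smul, star_dotProduct_self_eq_norm_sq, smul_eq_mul] at this
    simp only [norm_defect_eq hU] at this
    exact_mod_cast this
  have hpoincare := sum_norm_sq_le_of_sum_eq_zero ℂ N (gauge U w) (sum_gauge_eq_zero hperp)
  rw [← norm_sq_eq_sum_norm_sq_gauge hU] at hpoincare
  have hpos : 0 < ‖toLp 2 w‖ ^ 2 := by
    have : toLp 2 w ≠ 0 := by simpa using hw
    positivity
  have : 1 * ‖toLp 2 w‖ ^ 2 ≤ N * (N + 1) * r * ‖toLp 2 w‖ ^ 2 := by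
    rw [one_mul]
    calc ‖toLp 2 w‖ ^ 2
        ≤ N * (N + 1) / 2 * ∑ j : Fin N, ‖gauge U w j.succ - gauge U w j.castSucc‖ ^ 2 :=
          hpoincare
      _ = N * (N + 1) * r * ‖toLp 2 w‖ ^ 2 := by rw [mul_assoc _ r, hquad]; ring
  exact le_of_mul_le_mul_right this hpos

end Hprop

theorem stmt_8 :
    (∀ (D N : ℕ) (U : ℕ → Matrix (Fin D) (Fin D) ℂ), 1 ≤ D → 1 ≤ N →
      (∀ j, 1 ≤ j → j ≤ N → (U j)ᴴ * U j = 1 ∧ U j * (U j)ᴴ = 1) →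
      (∀ j, 1 ≤ j → j ≤ N → j % 2 = 0 → U j = 1) →
      ∀ w : Fin D × Fin (N + 1) → ℂ,
        (Hprop D N U).mulVec w = 0 ↔
          ∃ α : Fin D → ℂ, w = fun p => ((prodU D U p.2.val).mulVec α) p.1) ∧
    (∃ c : ℝ, 0 < c ∧
      ∀ (D N : ℕ) (U : ℕ → Matrix (Fin D) (Fin D) ℂ), 1 ≤ D → 1 ≤ N →
        (∀ j, 1 ≤ j → j ≤ N → (U j)ᴴ * U j = 1 ∧ U j * (U j)ᴴ = 1) →
        (∀ j, 1 ≤ j → j ≤ N → j % 2 = 0 → U j = 1) →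
        gammaM (Hprop D N U) ≥ c / (N : ℝ) ^ 2) := by
  have hunitary {D N : ℕ} {U : ℕ → Matrix (Fin D) (Fin D) ℂ}
      (hU : ∀ j, 1 ≤ j → j ≤ N → (U j)ᴴ * U j = 1 ∧ U j * (U j)ᴴ = 1) :
      ∀ j < N, U (j + 1) ∈ unitaryGroup (Fin D) ℂ := fun j hj =>
    mem_unitaryGroup_iff'.2 (hU (j + 1) (by omega) hj).1
  refine ⟨fun D N U _ _ hU _ w => ?_, ⟨1 / 2, by norm_num, fun D N U hD hN hU _ => ?_⟩⟩
  · rw [Hprop.mulVec_eq_zero_iff_forall_defect_eq_zero (hunitary hU),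
      Hprop.forall_defect_eq_zero_iff]
  · refine le_gammaM (Hprop.isHermitian U) (Hprop.ne_zero U hD hN) fun r w hr hw h => ?_
    have hgap := Hprop.one_le_mul_eigenvalue (hunitary hU) hr hw h
    have hN' : (1 : ℝ) ≤ N := by exact_mod_cast hN
    rw [div_div, div_le_iff₀ (by positivity)]
    nlinarith
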